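/- Every subgradient v of g(x) = min_{u ∈ D} |aᵀ(u − x)| at any point x satisfies aᵀb = 0 ⟹ vᵀb = 0; that is, v = λ·a for some scalar λ ∈ [−1, 1]. -/

import Mathlib

/-!
The function `g` only depends on `aᵀx`: `g x = φ (aᵀx)` where `φ t` is the distance from `t`
to the set `aᵀD`, a `1`-Lipschitz function. Hence `g` is constant along `a^⊥`,
so a subgradient kills `a^⊥` and is a multiple `λ • a`; testing the subgradient inequality
at `x + λ • a` against the Lipschitz bound gives `λ² |a|² ≤ |λ| |a|²`, i.e. `|λ| ≤ 1`.
-/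

open Matrix

variable {n : Type*} [Fintype n]

lemma sInf_abs_dotProduct_sub_eq_infDist (a x : n → ℝ) (D : Set (n → ℝ)) :
    sInf ((fun u => |a ⬝ᵥ (u - x)|) '' D) = Metric.infDist (a ⬝ᵥ x) ((a ⬝ᵥ ·) '' D) := by
  rcases D.eq_empty_or_nonempty with rfl | hD
  · simp
  have himage : (fun u => |a ⬝ᵥ (u - x)|) '' D = (dist (a ⬝ᵥ x) ·) '' ((a ⬝ᵥ ·) '' D) := by
    rw [Set.image_image]
    refine Set.image_congr fun u _ => ?_
    rw [dotProduct_sub, Real.dist_eq, abs_sub_comm]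
  rw [himage]
  exact (Metric.isGLB_infDist (hD.image _)).csInf_eq (hD.image _ |>.image _)

lemma exists_eq_smul_of_forall_dotProduct_eq_zero {a v : n → ℝ} (ha : a ≠ 0)
    (h : ∀ c, a ⬝ᵥ c = 0 → v ⬝ᵥ c = 0) : ∃ lam : ℝ, v = lam • a := by
  have hS : a ⬝ᵥ a ≠ 0 := fun h0 => ha (dotProduct_self_eq_zero.mp h0)
  set lam := (v ⬝ᵥ a) / (a ⬝ᵥ a)
  have ha_perp : a ⬝ᵥ (v - lam • a) = 0 := by
    rw [dotProduct_sub, dotProduct_smul, smul_eq_mul, dotProduct_comm a v,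
      div_mul_cancel₀ _ hS, sub_self]
  have hv_perp : v ⬝ᵥ (v - lam • a) = 0 := h _ ha_perp
  have hself : (v - lam • a) ⬝ᵥ (v - lam • a) = 0 := by
    rw [sub_dotProduct, smul_dotProduct, hv_perp, ha_perp, smul_zero, sub_zero]
  exact ⟨lam, sub_eq_zero.mp (dotProduct_self_eq_zero.mp hself)⟩

section Subgradient

variable {φ : ℝ → ℝ} {a v x : n → ℝ}

lemma dotProduct_eq_zero_of_isSubgradient_comp_dotProduct
    (hv : ∀ y, φ (a ⬝ᵥ y) ≥ φ (a ⬝ᵥ x) + v ⬝ᵥ (y - x)) {c : n → ℝ} (hc : a ⬝ᵥ c = 0) :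
    v ⬝ᵥ c = 0 := by
  have hplus := hv (x + c)
  have hminus := hv (x - c)
  simp only [dotProduct_add, dotProduct_sub, hc, add_zero, sub_zero, add_sub_cancel_left,
    sub_sub_cancel_left, dotProduct_neg] at hplus hminus
  linarith

lemma abs_le_one_of_isSubgradient_comp_dotProduct (hφ : LipschitzWith 1 φ) (ha : a ≠ 0)
    (hv : ∀ y, φ (a ⬝ᵥ y) ≥ φ (a ⬝ᵥ x) + v ⬝ᵥ (y - x)) {lam : ℝ} (hva : v = lam • a) :
    |lam| ≤ 1 := by
  have hS : 0 < a ⬝ᵥ a := dotProduct_self_star_pos_iff.mpr ha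
  have hlower := hv (x + lam • a)
  have hupper : φ (a ⬝ᵥ x + lam * (a ⬝ᵥ a)) ≤ φ (a ⬝ᵥ x) + |lam| * (a ⬝ᵥ a) := by
    have := hφ.dist_le_mul (a ⬝ᵥ x + lam * (a ⬝ᵥ a)) (a ⬝ᵥ x)
    rw [Real.dist_eq, Real.dist_eq, add_sub_cancel_left, abs_mul, abs_of_pos hS,
      NNReal.coe_one, one_mul] at this
    linarith [le_abs_self (φ (a ⬝ᵥ x + lam * (a ⬝ᵥ a)) - φ (a ⬝ᵥ x))]
  rw [hva, add_sub_cancel_left, dotProduct_add, smul_dotProduct, dotProduct_smul, smul_eq_mul,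
    smul_eq_mul] at hlower
  have hsq : lam ^ 2 ≤ |lam| := le_of_mul_le_mul_right (by nlinarith) hS
  nlinarith [sq_abs lam, abs_nonneg lam]

end Subgradient

theorem stmt11_general (d : ℕ) (a : Fin d → ℝ) (ha : a ≠ 0)
    (D : Set (Fin d → ℝ)) (g : (Fin d → ℝ) → ℝ)
    (hg : ∀ x, g x = sInf ((fun u => |∑ i, a i * (u i - x i)|) '' D))
    (x v : Fin d → ℝ)
    (hv : ∀ y, g y ≥ g x + ∑ i, v i * (y i - x i)) :
    (∀ c : Fin d → ℝ, (∑ i, a i * c i) = 0 → (∑ i, v i * c i) = 0) ∧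
    ∃ lam : ℝ, lam ∈ Set.Icc (-1 : ℝ) 1 ∧ v = lam • a := by
  set φ : ℝ → ℝ := (Metric.infDist · ((a ⬝ᵥ ·) '' D))
  have hgφ : ∀ y, g y = φ (a ⬝ᵥ y) :=
    fun y => (hg y).trans (sInf_abs_dotProduct_sub_eq_infDist a y D)
  have hsub : ∀ y, φ (a ⬝ᵥ y) ≥ φ (a ⬝ᵥ x) + v ⬝ᵥ (y - x) := by
    intro y
    rw [← hgφ, ← hgφ]
    exact hv y
  have hperp : ∀ c, a ⬝ᵥ c = 0 → v ⬝ᵥ c = 0 :=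
    fun c => dotProduct_eq_zero_of_isSubgradient_comp_dotProduct hsub
  obtain ⟨lam, hva⟩ := exists_eq_smul_of_forall_dotProduct_eq_zero ha hperp
  have hlam := abs_le_one_of_isSubgradient_comp_dotProduct
    (Metric.lipschitz_infDist_pt _) ha hsub hva
  exact ⟨hperp, lam, abs_le.mp hlam, hva⟩

/-- Every subgradient `v` of `g x = min_{u ∈ D} |aᵀ(u − x)|` is orthogonal to the
orthogonal complement of `a`, i.e. `v = λ·a` for some `λ ∈ [−1,1]`. -/
theorem stmt11 (d : ℕ) (a : Fin d → ℝ) (ha : a ≠ 0)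
    (D : Set (Fin d → ℝ)) (hne : D.Nonempty) (hcomp : IsCompact D) (hconv : Convex ℝ D)
    (h0 : (0 : Fin d → ℝ) ∈ D)
    (g : (Fin d → ℝ) → ℝ)
    (hg : ∀ x, g x = sInf ((fun u => |∑ i, a i * (u i - x i)|) '' D))
    (x v : Fin d → ℝ)
    (hv : ∀ y, g y ≥ g x + ∑ i, v i * (y i - x i)) :
    (∀ c : Fin d → ℝ, (∑ i, a i * c i) = 0 → (∑ i, v i * c i) = 0) ∧
    ∃ lam : ℝ, lam ∈ Set.Icc (-1 : ℝ) 1 ∧ v = lam • a :=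
  stmt11_general d a ha D g hg x v hv
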